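/- Let X and Y be Banach spaces with X reflexive and continuously embedded into Y, and let K be a non-empty, convex, bounded, closed subset of X. If T : K → K satisfies ‖T(u) − T(v)‖_Y ≤ κ‖u − v‖_Y for all u, v ∈ K with some constant 0 ≤ κ < 1, then T possesses a unique fixed point in K. -/

import Mathlib

/-!
Reflexivity makes the bounded, closed, convex set `K` weakly compact. Since `e` is also continuous
for the weak topologies, `e '' K` is weakly compact in `Y`, hence weakly closed and a fortiori
norm closed, so it is complete. Transported to `e '' K` via the injective `e`, the map `T` is a
contraction of a non-empty complete metric space, and Banach's fixed point theorem applies.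
-/

open Set Function NNReal NormedSpace

theorem isCompact_toWeakSpace_image_of_surjective_inclusionInDoubleDual
    {X : Type*} [NormedAddCommGroup X] [NormedSpace ℝ X]
    (hrefl : Surjective (inclusionInDoubleDual ℝ X)) {K : Set X}
    (hconv : Convex ℝ K) (hbdd : Bornology.IsBounded K) (hcl : IsClosed K) :
    IsCompact (toWeakSpace ℝ X '' K) := by
  have hKw : closure (toWeakSpace ℝ X '' K) = toWeakSpace ℝ X '' K := by
    rw [← hconv.toWeakSpace_closure ℝ, hcl.closure_eq]
  rw [← hKw]
  refine isCompact_closure_of_isBounded ℝ X _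
    (by rwa [(toWeakSpace ℝ X).injective.preimage_image]) fun Φ _ => ?_
  obtain ⟨x, hx⟩ := hrefl (StrongDual.toWeakDual.symm Φ)
  exact ⟨toWeakSpace ℝ X x, DFunLike.ext _ _ (DFunLike.congr_fun hx)⟩

theorem ContinuousLinearMap.isClosed_image_of_isCompact_toWeakSpace_image
    {𝕜 X Y : Type*} [RCLike 𝕜] [NormedAddCommGroup X] [NormedSpace 𝕜 X]
    [NormedAddCommGroup Y] [NormedSpace 𝕜 Y] (e : X →L[𝕜] Y) {K : Set X}
    (hK : IsCompact (toWeakSpace 𝕜 X '' K)) :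
    IsClosed (e '' K) := by
  have hweak : IsClosed (toWeakSpace 𝕜 Y '' (e '' K)) := by
    have := (hK.image (WeakSpace.map e).continuous).isClosed
    rw [image_image] at this ⊢
    exact this
  convert hweak.preimage (toWeakSpaceCLM 𝕜 Y).continuous
  exact ((toWeakSpace 𝕜 Y).injective.preimage_image _).symm

theorem existsUnique_fixedPoint_of_isComplete_image {α β : Type*} [MetricSpace β]
    {e : α → β} {K : Set α} (he : InjOn e K) (hK : IsComplete (e '' K)) (hne : K.Nonempty)
    {T : α → α} (hmaps : MapsTo T K K) {κ : ℝ≥0} (hκ : κ < 1)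
    (hT : ∀ u ∈ K, ∀ v ∈ K, dist (e (T u)) (e (T v)) ≤ κ * dist (e u) (e v)) :
    ∃! x, x ∈ K ∧ T x = x := by
  let φ : K ≃ e '' K := Equiv.Set.imageOfInjOn e K he
  let g : e '' K → e '' K := φ ∘ MapsTo.restrict T K K hmaps ∘ φ.symm
  have : CompleteSpace (e '' K) := hK.completeSpace_coe
  have : Nonempty (e '' K) := (hne.image e).to_subtype
  have hgφ (u : K) : g (φ u) = φ (MapsTo.restrict T K K hmaps u) := by simp [g]
  have hg : ContractingWith κ g := ⟨hκ, LipschitzWith.of_dist_le_mul fun a b => by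
    obtain ⟨u, rfl⟩ := φ.surjective a
    obtain ⟨v, rfl⟩ := φ.surjective b
    rw [hgφ, hgφ]
    exact hT _ u.2 _ v.2⟩
  have hfix (u : K) : IsFixedPt g (φ u) ↔ T u = u := by
    rw [IsFixedPt, hgφ, φ.injective.eq_iff, Subtype.ext_iff, MapsTo.val_restrict_apply]
  obtain ⟨u, hu⟩ := φ.surjective (ContractingWith.fixedPoint g hg)
  refine ⟨u, ⟨u.2, (hfix u).1 (hu ▸ hg.fixedPoint_isFixedPt)⟩, fun z ⟨hz, hTz⟩ => ?_⟩
  have := hg.fixedPoint_unique ((hfix ⟨z, hz⟩).2 hTz)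
  rw [← hu] at this
  exact congrArg Subtype.val (φ.injective this)

theorem fixed_point_contraction_in_weaker_norm_general
    (X Y : Type*) [NormedAddCommGroup X] [NormedSpace ℝ X]
    [NormedAddCommGroup Y] [NormedSpace ℝ Y] [CompleteSpace Y]
    (hrefl : Function.Surjective (NormedSpace.inclusionInDoubleDual ℝ X))
    (e : X →L[ℝ] Y) (he : Function.Injective e)
    (K : Set X) (hne : K.Nonempty) (hconv : Convex ℝ K)
    (hbdd : Bornology.IsBounded K) (hcl : IsClosed K)
    (T : X → X) (hmaps : Set.MapsTo T K K)
    (κ : ℝ) (hκ0 : 0 ≤ κ) (hκ1 : κ < 1)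
    (hT : ∀ u ∈ K, ∀ v ∈ K, ‖e (T u) - e (T v)‖ ≤ κ * ‖e u - e v‖) :
    ∃! x, x ∈ K ∧ T x = x := by
  have hK : IsCompact (toWeakSpace ℝ X '' K) :=
    isCompact_toWeakSpace_image_of_surjective_inclusionInDoubleDual hrefl hconv hbdd hcl
  have heK : IsComplete (e '' K) :=
    (e.isClosed_image_of_isCompact_toWeakSpace_image hK).isComplete
  exact existsUnique_fixedPoint_of_isComplete_image he.injOn heK hne hmaps (κ := ⟨κ, hκ0⟩) hκ1
    fun u hu v hv => by rw [dist_eq_norm, dist_eq_norm]; exact hT u hu v hv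

/-- Banach fixed point theorem variant: `X`, `Y` Banach spaces, `X` reflexive
(the canonical inclusion into the double dual is surjective) and continuously embedded
into `Y` via an injective continuous linear map `e`; `K ⊆ X` non-empty, convex, bounded
and closed; `T : K → K` a contraction with respect to the `Y`-metric. Then `T` has a
unique fixed point in `K`. -/
theorem fixed_point_contraction_in_weaker_norm
    (X Y : Type*) [NormedAddCommGroup X] [NormedSpace ℝ X] [CompleteSpace X]
    [NormedAddCommGroup Y] [NormedSpace ℝ Y] [CompleteSpace Y]
    (hrefl : Function.Surjective (NormedSpace.inclusionInDoubleDual ℝ X))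
    (e : X →L[ℝ] Y) (he : Function.Injective e)
    (K : Set X) (hne : K.Nonempty) (hconv : Convex ℝ K)
    (hbdd : Bornology.IsBounded K) (hcl : IsClosed K)
    (T : X → X) (hmaps : Set.MapsTo T K K)
    (κ : ℝ) (hκ0 : 0 ≤ κ) (hκ1 : κ < 1)
    (hT : ∀ u ∈ K, ∀ v ∈ K, ‖e (T u) - e (T v)‖ ≤ κ * ‖e u - e v‖) :
    ∃! x, x ∈ K ∧ T x = x :=
  fixed_point_contraction_in_weaker_norm_general X Y hrefl e he K hne hconv hbdd hcl T hmaps κ hκ0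
    hκ1 hT
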